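/- Let α be a confluent continuous partial action of a monoid M on a T1 space X such that, for each generator g ∈ G, the partial map g: X ⇀ X has finite fibres. Then the topological globalization Y is T1. -/

import Mathlib

/-- One-step reduction on words over `G` induced by the rules `R` of a monoid
presentation `⟨G|R⟩`. -/
def MStep {G : Type*} (R : List G → List G → Prop) : List G → List G → Prop :=
  fun w₁ w₂ => ∃ a l r b : List G, R l r ∧ w₁ = a ++ l ++ b ∧ w₂ = a ++ r ++ b

/-- One-step reduction on `G* × X` for a confluent partial action: either
rewrite the word via `R`, or let the last (rightmost, acting first) generator
act on the point. -/
def PStep {G X : Type*} (R : List G → List G → Prop) (act : G → X → Option X) :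
    List G × X → List G × X → Prop := fun p q =>
  (MStep R p.1 q.1 ∧ p.2 = q.2) ∨
  (∃ (w : List G) (g : G) (y : X),
    p.1 = w ++ [g] ∧ act g p.2 = some y ∧ q.1 = w ∧ q.2 = y)

/-- The globalization `Y` of a confluent partial action: the quotient of
`G* × X` by the equivalence generated by the one-step reduction `PStep`. -/
def PGlob {G X : Type*} (R : List G → List G → Prop) (act : G → X → Option X) : Type _ :=
  Quot (Relation.EqvGen (PStep R act))

/-- The class of `(w, x)` in the globalization. -/
def PGlob.mk {G X : Type*} (R : List G → List G → Prop) (act : G → X → Option X)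
    (p : List G × X) : PGlob R act :=
  Quot.mk _ p

/-- The topological globalization: the final topology with respect to all the
maps `x ↦ [w, x]`, `w` a word over `G`. -/
instance {G X : Type*} (R : List G → List G → Prop) (act : G → X → Option X)
    [t : TopologicalSpace X] : TopologicalSpace (PGlob R act) :=
  ⨆ w : List G, TopologicalSpace.coinduced (fun x : X => PGlob.mk R act (w, x)) t

/-!
The globalization carries the final topology of the maps `x ↦ [w, x]`, so it is T1 as soon as
every fibre `{x | [w, x] = q}` is finite. Replacing `w` by an `R`-normal form does not change
`[w, x]`, and from `(w, x)` with `w` normal the only reductions let a suffix of `w` act on `x`.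
By confluence, two points `x, x₀` with `[w, x] = [w, x₀]` therefore have a common reduct, so some
suffix of `w` maps both to the same point. Words have finite fibres because generators do, and
`w` has finitely many suffixes.
-/

open Relation

theorem Relation.join_reflTransGen_of_eqvGen {α : Type*} {r : α → α → Prop}
    (hconf : ∀ a b c, ReflTransGen r a b → ReflTransGen r a c → Join (ReflTransGen r) b c)
    {a b : α} (h : EqvGen r a b) : Join (ReflTransGen r) a b :=
  (equivalence_join hconf).eqvGen_iff.1 (h.mono fun _ _ hab => ⟨_, .single hab, .refl⟩)

theorem WellFounded.exists_reflTransGen_normal {α : Type*} {r : α → α → Prop}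
    (hr : WellFounded (flip r)) (a : α) : ∃ b, ReflTransGen r a b ∧ ∀ c, ¬ r b c := by
  obtain ⟨b, hab, hmin⟩ := hr.has_min {b | ReflTransGen r a b} ⟨a, .refl⟩
  exact ⟨b, hab, fun c hbc => hmin c (hab.tail hbc) hbc⟩

theorem List.finite_setOf_foldrM_eq_some {G X : Type*} {act : G → X → Option X}
    (hfib : ∀ g x, {x' | act g x' = some x}.Finite) (w : List G) (z : X) :
    {x | w.foldrM act x = some z}.Finite := by
  induction w generalizing z with
  | nil => simp
  | cons g w ih =>
    refine ((hfib g z).biUnion fun y _ => ih y).subset fun x hx => ?_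
    obtain ⟨y, hy, hgy⟩ := Option.bind_eq_some_iff.1 (by simpa [List.foldrM_cons] using hx)
    exact Set.mem_biUnion hgy hy

theorem MStep.append_right {G : Type*} {R : List G → List G → Prop} {u v : List G}
    (h : MStep R u v) (s : List G) : MStep R (u ++ s) (v ++ s) := by
  obtain ⟨a, l, r, b, hR, rfl, rfl⟩ := h
  exact ⟨a, l, r, b ++ s, hR, by simp, by simp⟩

section

variable {G X : Type*} {R : List G → List G → Prop} {act : G → X → Option X}

theorem PStep.reflTransGen_of_mStep {w w' : List G} (h : ReflTransGen (MStep R) w w') (x : X) :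
    ReflTransGen (PStep R act) (w, x) (w', x) :=
  h.lift (fun w => (w, x)) fun _ _ hm => Or.inl ⟨hm, rfl⟩

-- `s.foldrM act x` lets the letters of `s` act from right to left, as in `PStep`.
theorem PStep.exists_suffix_of_reflTransGen {w : List G} (hw : ∀ v, ¬ MStep R w v) {x : X}
    {p : List G × X} (h : ReflTransGen (PStep R act) (w, x) p) :
    ∃ s, w = p.1 ++ s ∧ s.foldrM act x = some p.2 := by
  induction h with
  | refl => exact ⟨[], by simp, rfl⟩
  | tail _ hstep ih =>
    obtain ⟨s, rfl, hs⟩ := ih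
    rcases hstep with ⟨hm, -⟩ | ⟨u, g, y, hb, hact, hu, hy⟩
    · exact absurd (hm.append_right s) (hw _)
    · refine ⟨g :: s, by simp [hb, hu], ?_⟩
      simp [List.foldrM_cons, hs, hact, hy]

theorem PGlob.mk_eq_of_mStep {w w' : List G} (h : ReflTransGen (MStep R) w w') (x : X) :
    PGlob.mk R act (w, x) = PGlob.mk R act (w', x) :=
  Quot.sound (EqvGen.reflTransGen_le_eqvGen _ _ _ (PStep.reflTransGen_of_mStep h x))

theorem PGlob.finite_setOf_mk_eq_of_normal
    (hconfP : ∀ p q₁ q₂ : List G × X, ReflTransGen (PStep R act) p q₁ →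
      ReflTransGen (PStep R act) p q₂ → Join (ReflTransGen (PStep R act)) q₁ q₂)
    (hfib : ∀ (g : G) (x : X), {x' : X | act g x' = some x}.Finite)
    {w : List G} (hw : ∀ v, ¬ MStep R w v) (q : PGlob R act) :
    {x | PGlob.mk R act (w, x) = q}.Finite := by
  rcases Set.eq_empty_or_nonempty {x | PGlob.mk R act (w, x) = q} with he | ⟨x₀, hx₀⟩
  · simp [he]
  have hfin : (⋃ s ∈ {s | s ∈ w.tails}, ⋃ z ∈ {z | s.foldrM act x₀ = some z},
      {x | s.foldrM act x = some z}).Finite :=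
    w.tails.finite_toSet.biUnion fun s _ =>
      (show {z | s.foldrM act x₀ = some z}.Subsingleton from
        fun _ h₁ _ h₂ => Option.some_injective _ (h₁.symm.trans h₂)).finite.biUnion
      fun z _ => s.finite_setOf_foldrM_eq_some hfib z
  refine hfin.subset fun x hx => ?_
  have hxx₀ : EqvGen (PStep R act) (w, x) (w, x₀) :=
    (EqvGen.is_equivalence _).eqvGen_iff.1 (Quot.eqvGen_exact (hx.trans hx₀.symm))
  obtain ⟨p, hxp, hx₀p⟩ := join_reflTransGen_of_eqvGen hconfP hxx₀
  obtain ⟨s, hws, hs⟩ := PStep.exists_suffix_of_reflTransGen hw hxp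
  obtain ⟨s₀, hws₀, hs₀⟩ := PStep.exists_suffix_of_reflTransGen hw hx₀p
  obtain rfl : s₀ = s := List.append_cancel_left (hws₀.symm.trans hws)
  exact Set.mem_biUnion ((List.mem_tails _ _).2 ⟨p.1, hws.symm⟩)
    (Set.mem_biUnion (show p.2 ∈ {z | s₀.foldrM act x₀ = some z} from hs₀) hs)

end

theorem stmt_13_general {G X : Type*} [TopologicalSpace X] [T1Space X]
    (R : List G → List G → Prop) (act : G → X → Option X)
    (hnoeth : WellFounded (fun w₁ w₂ : List G => MStep R w₂ w₁))
    (hconfP : ∀ p q₁ q₂ : List G × X, Relation.ReflTransGen (PStep R act) p q₁ →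
      Relation.ReflTransGen (PStep R act) p q₂ →
      ∃ t, Relation.ReflTransGen (PStep R act) q₁ t ∧
        Relation.ReflTransGen (PStep R act) q₂ t)
    (hfib : ∀ (g : G) (x : X), {x' : X | act g x' = some x}.Finite) :
    T1Space (PGlob R act) := by
  refine ⟨fun q => isClosed_iSup_iff.2 fun w => isClosed_coinduced.2 ?_⟩
  obtain ⟨w', hww', hw'⟩ := hnoeth.exists_reflTransGen_normal w
  have hpre : (fun x => PGlob.mk R act (w, x)) ⁻¹' {q} = {x | PGlob.mk R act (w', x) = q} := by
    ext x
    simp only [Set.mem_preimage, Set.mem_singleton_iff, Set.mem_ofPred_eq,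
      PGlob.mk_eq_of_mStep hww' x]
  exact hpre ▸ (PGlob.finite_setOf_mk_eq_of_normal hconfP hfib hw' q).isClosed

/-- If `X` is T1 and, for each generator `g ∈ G`, the partial map `g : X ⇀ X`
has finite fibres, then the topological globalization `Y` of a confluent
continuous partial action is T1. -/
theorem stmt_13 {G X : Type*} [TopologicalSpace X] [T1Space X]
    (R : List G → List G → Prop) (act : G → X → Option X)
    (hnoeth : WellFounded (fun w₁ w₂ : List G => MStep R w₂ w₁))
    (hconfM : ∀ w s₁ s₂ : List G, Relation.ReflTransGen (MStep R) w s₁ →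
      Relation.ReflTransGen (MStep R) w s₂ →
      ∃ t, Relation.ReflTransGen (MStep R) s₁ t ∧ Relation.ReflTransGen (MStep R) s₂ t)
    (hnosingle : ∀ (g : G) (r : List G), ¬ R [g] r)
    (hconfP : ∀ p q₁ q₂ : List G × X, Relation.ReflTransGen (PStep R act) p q₁ →
      Relation.ReflTransGen (PStep R act) p q₂ →
      ∃ t, Relation.ReflTransGen (PStep R act) q₁ t ∧
        Relation.ReflTransGen (PStep R act) q₂ t)
    (hcont : ∀ g : G, ContinuousOn (fun x => (act g x).getD x) {x | (act g x).isSome})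
    (hfib : ∀ (g : G) (x : X), {x' : X | act g x' = some x}.Finite) :
    T1Space (PGlob R act) :=
  stmt_13_general R act hnoeth hconfP hfib
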